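/- With Δ_i = t_i − t_{i−1} > 0, A = −1, B = 1, and g_{t_i} := exp(t_{i−1} − t_i), the ZOH-discretized recurrence z_{t_i} = Ā(t_i)·z_{t_{i−1}} + B̄(t_i)·x_{t_i} equals the gated recurrence z_{t_i} = g_{t_i}·z_{t_{i−1}} + (1 − g_{t_i})·x_{t_i}, and g_{t_i} ∈ (0, 1). -/

import Mathlib

theorem zoh_input_gain_eq {Δ A : ℝ} (hΔ : Δ ≠ 0) (hA : A ≠ 0) (B : ℝ) :
    (Δ * A)⁻¹ * (Real.exp (Δ * A) - 1) * (Δ * B) = (Real.exp (Δ * A) - 1) * B / A := by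
  field_simp

theorem stmt_1_general (t : ℕ → ℝ) (i : ℕ) (hΔ : 0 < t i - t (i - 1))
    (A B : ℝ) (hA : A = -1) (hB : B = 1)
    (Abar Bbar g : ℝ)
    (hAbar : Abar = Real.exp ((t i - t (i - 1)) * A))
    (hBbar : Bbar = ((t i - t (i - 1)) * A)⁻¹ * (Real.exp ((t i - t (i - 1)) * A) - 1) *
      ((t i - t (i - 1)) * B))
    (hg : g = Real.exp (t (i - 1) - t i)) :
    (∀ z x : ℝ, Abar * z + Bbar * x = g * z + (1 - g) * x) ∧ 0 < g ∧ g < 1 := by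
  subst hA hB hAbar hBbar hg
  have hgate : t (i - 1) - t i = (t i - t (i - 1)) * -1 := by ring
  rw [hgate, zoh_input_gain_eq hΔ.ne' (by norm_num)]
  refine ⟨fun z x => by ring, Real.exp_pos _, ?_⟩
  exact Real.exp_lt_one_iff.mpr (by linarith)

/-- With Δᵢ = tᵢ - tᵢ₋₁ > 0, A = -1, B = 1, the ZOH recurrence equals the gated
    recurrence with gate g = exp(tᵢ₋₁ - tᵢ) ∈ (0,1). -/
theorem stmt_1 (t : ℕ → ℝ) (i : ℕ) (hi : 1 ≤ i) (hΔ : 0 < t i - t (i - 1))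
    (A B : ℝ) (hA : A = -1) (hB : B = 1)
    (Abar Bbar g : ℝ)
    (hAbar : Abar = Real.exp ((t i - t (i - 1)) * A))
    (hBbar : Bbar = ((t i - t (i - 1)) * A)⁻¹ * (Real.exp ((t i - t (i - 1)) * A) - 1) *
      ((t i - t (i - 1)) * B))
    (hg : g = Real.exp (t (i - 1) - t i)) :
    (∀ z x : ℝ, Abar * z + Bbar * x = g * z + (1 - g) * x) ∧ 0 < g ∧ g < 1 :=
  stmt_1_general t i hΔ A B hA hB Abar Bbar g hAbar hBbar hg
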